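/- Let T and T' be the two 8-leaf gadget trees on leaf set {a_i, a_j, a_k, c^1, c^2, c^3, c^4, d} used in the reduction (the top-right and bottom-right trees of the triple gadget). Then every ordering of the leaves that is a cherry-picking sequence for {T, T'} satisfies either a_i < a_j < a_k or a_j < a_k < a_i. -/

import Mathlib

/-- A rooted binary tree with labeled leaves. -/
inductive PhyloTree (α : Type) where
  | leaf (a : α) : PhyloTree α
  | node (l r : PhyloTree α) : PhyloTree α
deriving DecidableEq

namespace PhyloTree

variable {α : Type} [DecidableEq α]

/-- The list of leaf labels, left to right. -/
def leafList : PhyloTree α → List α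
  | leaf a => [a]
  | node l r => leafList l ++ leafList r

/-- A tree is a (valid) phylogenetic tree if its leaf labels are pairwise distinct. -/
def Phylo (T : PhyloTree α) : Prop := T.leafList.Nodup

/-- `{a,b}` is a cherry of `T`: `a` and `b` are leaves adjacent to a common parent. -/
def HasCherry : PhyloTree α → α → α → Prop
  | leaf _, _, _ => False
  | node (leaf x) (leaf y), a, b => (a = x ∧ b = y) ∨ (a = y ∧ b = x)
  | node l r, a, b => HasCherry l a b ∨ HasCherry r a b

/-- `a` is a leaf of a cherry of `T`. -/
def IsCherryLeaf (T : PhyloTree α) (a : α) : Prop := ∃ b, HasCherry T a b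

/-- The number of cherries of `T`. -/
def numCherries : PhyloTree α → ℕ
  | leaf _ => 0
  | node (leaf _) (leaf _) => 1
  | node l r => numCherries l + numCherries r

/-- Delete the leaf labeled `a` and suppress the resulting degree-2 vertex. -/
def delete : PhyloTree α → α → PhyloTree α
  | leaf b, _ => leaf b
  | node l r, a =>
    if l = leaf a then r
    else if r = leaf a then l
    else node (delete l a) (delete r a)

/-- Delete a list of leaves in order. -/
def deleteAll (T : PhyloTree α) (xs : List α) : PhyloTree α := xs.foldl delete T

/-- `(x_1,…,x_n)` is a cherry-picking sequence for the collection `P`: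
each `x_i` except possibly the last labels a leaf of a cherry in every tree of
`P` after the deletion of `x_1,…,x_{i-1}`. -/
def IsCPS (P : List (PhyloTree α)) (xs : List α) : Prop :=
  ∀ T ∈ P, ∀ i : Fin xs.length, (i : ℕ) < xs.length - 1 →
    IsCherryLeaf (deleteAll T (xs.take i)) (xs.get i)

/-- The collection `P` of trees (on a common leaf set) has a cherry-picking sequence. -/
def HasCPS (P : List (PhyloTree α)) : Prop :=
  ∃ xs : List α, (∀ T ∈ P, xs.Perm T.leafList) ∧ IsCPS P xs

/-- The caterpillar `(a, b, c_1, …, c_k)` with cherry `{a,b}`. -/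
def caterpillar (a b : α) (cs : List α) : PhyloTree α :=
  cs.foldl (fun t c => node t (leaf c)) (node (leaf a) (leaf b))

/-- Number of leaves. -/
def numLeaves : PhyloTree α → ℕ
  | leaf _ => 1
  | node l r => numLeaves l + numLeaves r

/-- Number of vertices. -/
def numVertices : PhyloTree α → ℕ
  | leaf _ => 1
  | node l r => numVertices l + numVertices r + 1

end PhyloTree

namespace PhyloTree

variable {α : Type} [DecidableEq α]

/-- The first (top-right) 8-leaf gadget tree for a triple `(a_i,a_j,a_k)`,
on leaf set `{a_i,a_j,a_k,c¹,c²,c³,c⁴,d}`. -/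
def tripleGadget (ai aj ak c1 c2 c3 c4 d : α) : PhyloTree α :=
  node
    (node (node (node (leaf ai) (leaf aj)) (node (leaf ak) (leaf c2))) (leaf c4))
    (node (node (leaf c1) (leaf c3)) (leaf d))

/-- The second (bottom-right) 8-leaf gadget tree for a triple `(a_i,a_j,a_k)`,
on leaf set `{a_i,a_j,a_k,c¹,c²,c³,c⁴,d}`. -/
def tripleGadget' (ai aj ak c1 c2 c3 c4 d : α) : PhyloTree α :=
  node
    (node (node (node (leaf ai) (leaf c3)) (leaf c2))
      (node (node (leaf aj) (leaf c4)) (leaf ak)))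
    (node (leaf c1) (leaf d))

end PhyloTree


/-!
The claim is invariant under injective relabelling of the leaves, so it suffices to check it
for the gadget trees on the leaves `0, …, 7` of `Fin 8`. There, every common cherry-picking
sequence is found by a depth-first search that at each step picks a leaf lying in a cherry of
both trees and deletes it; the kernel checks the order condition on the finitely many
sequences the search produces.
-/

theorem List.idxOf_map_of_injective {α β : Type} [DecidableEq α] [DecidableEq β] {f : α → β}
    (hf : Function.Injective f) (l : List α) (a : α) : (l.map f).idxOf (f a) = l.idxOf a := by
  induction l with
  | nil => rfl
  | cons b l ih => simp only [List.map_cons, List.idxOf_cons, hf.beq_eq, ih]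

namespace PhyloTree

variable {α β : Type}

def cherryLeaves : PhyloTree α → List α
  | leaf _ => []
  | node (leaf x) (leaf y) => [x, y]
  | node l r => cherryLeaves l ++ cherryLeaves r

theorem isCherryLeaf_iff_mem_cherryLeaves (T : PhyloTree α) (a : α) :
    IsCherryLeaf T a ↔ a ∈ T.cherryLeaves := by
  unfold IsCherryLeaf
  fun_induction cherryLeaves T with
  | case1 => simp [HasCherry]
  | case2 x y => simp [HasCherry]; grind
  | case3 l r h ihl ihr =>
    simp only [HasCherry.eq_3 _ _ l r h]
    simp [← ihl, ← ihr, exists_or]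

def map (f : α → β) : PhyloTree α → PhyloTree β
  | leaf a => leaf (f a)
  | node l r => node (l.map f) (r.map f)

theorem map_eq_leaf_iff {f : α → β} (hf : Function.Injective f) (T : PhyloTree α) (a : α) :
    T.map f = leaf (f a) ↔ T = leaf a := by
  cases T <;> simp [map, hf.eq_iff]

theorem cherryLeaves_map (f : α → β) (T : PhyloTree α) :
    (T.map f).cherryLeaves = T.cherryLeaves.map f := by
  fun_induction cherryLeaves T with
  | case1 => rfl
  | case2 => rfl
  | case3 l r h ihl ihr =>
    rw [map, cherryLeaves.eq_3, ihl, ihr, List.map_append]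
    intro x y hl hr
    cases l <;> cases r <;> simp_all [map]

theorem isCherryLeaf_map_iff {f : α → β} (hf : Function.Injective f) (T : PhyloTree α) (a : α) :
    IsCherryLeaf (T.map f) (f a) ↔ IsCherryLeaf T a := by
  rw [isCherryLeaf_iff_mem_cherryLeaves, isCherryLeaf_iff_mem_cherryLeaves, cherryLeaves_map,
    List.mem_map_of_injective hf]

variable [DecidableEq α] [DecidableEq β]

theorem delete_map {f : α → β} (hf : Function.Injective f) (T : PhyloTree α) (a : α) :
    (T.map f).delete (f a) = (T.delete a).map f := by
  induction T with
  | leaf => rfl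
  | node l r ihl ihr =>
    simp only [map, delete, map_eq_leaf_iff hf]
    split_ifs <;> simp [map, ihl, ihr]

theorem deleteAll_map {f : α → β} (hf : Function.Injective f) (T : PhyloTree α) (xs : List α) :
    (T.map f).deleteAll (xs.map f) = (T.deleteAll xs).map f := by
  induction xs generalizing T with
  | nil => rfl
  | cons x xs ih =>
    simp only [deleteAll, List.map_cons, List.foldl_cons, delete_map hf] at ih ⊢
    exact ih _

theorem IsCPS.of_map {f : α → β} (hf : Function.Injective f) {P : List (PhyloTree α)}
    {xs : List α} (h : IsCPS (P.map (map f)) (xs.map f)) : IsCPS P xs := by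
  intro T hT i hi
  have := h (T.map f) (List.mem_map_of_mem hT) ⟨i, by simp⟩ (by simpa using hi)
  simpa only [List.get_eq_getElem, List.getElem_map, ← List.map_take, deleteAll_map hf,
    isCherryLeaf_map_iff hf] using this

theorem IsCPS.isCherryLeaf_head {P : List (PhyloTree α)} {x y : α} {xs : List α}
    (h : IsCPS P (x :: y :: xs)) {T : PhyloTree α} (hT : T ∈ P) : IsCherryLeaf T x :=
  h T hT ⟨0, by simp⟩ (by simp)

theorem IsCPS.tail {P : List (PhyloTree α)} {x : α} {xs : List α} (h : IsCPS P (x :: xs)) :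
    IsCPS (P.map (·.delete x)) xs := by
  intro _ hT' i hi
  obtain ⟨T, hT, rfl⟩ := List.mem_map.mp hT'
  simpa [deleteAll] using h T hT i.succ (by simp only [Fin.val_succ, List.length_cons]; omega)

-- `n` is fuel: the search is complete once `rem.length ≤ n` (see `mem_cpsList`).
def cpsList : ℕ → List (PhyloTree α) → List α → List (List α)
  | 0, _, _ => [[]]
  | n + 1, P, rem =>
    if rem.length ≤ 1 then [rem] else
      (rem.filter fun x => P.all fun T => x ∈ T.cherryLeaves).flatMap fun x =>
        (cpsList n (P.map (·.delete x)) (rem.erase x)).map (x :: ·)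

theorem mem_cpsList {n : ℕ} {P : List (PhyloTree α)} {xs rem : List α} (h : IsCPS P xs)
    (hperm : xs.Perm rem) (hn : rem.length ≤ n) : xs ∈ cpsList n P rem := by
  induction n generalizing P xs rem with
  | zero =>
    obtain rfl := List.eq_nil_of_length_eq_zero (Nat.le_zero.mp hn)
    simp [cpsList, List.perm_nil.mp hperm]
  | succ n ih =>
    rcases xs with _ | ⟨x, _ | ⟨y, ys⟩⟩
    · simp [cpsList, List.nil_perm.mp hperm]
    · obtain rfl := List.singleton_perm.mp hperm
      simp [cpsList]
    · have hrem : ¬ rem.length ≤ 1 := by simp [← hperm.length_eq]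
      rw [cpsList, if_neg hrem]
      have hx : x ∈ rem := hperm.subset List.mem_cons_self
      simp only [List.mem_flatMap, List.mem_filter, List.all_eq_true, decide_eq_true_eq,
        List.mem_map, List.cons.injEq]
      refine ⟨x, ⟨hx, fun T hT => ?_⟩, y :: ys, ih h.tail ?_ ?_, rfl, rfl⟩
      · exact (isCherryLeaf_iff_mem_cherryLeaves T x).mp (h.isCherryLeaf_head hT)
      · simpa using hperm.erase x
      · rw [List.length_erase_of_mem hx]; omega

theorem tripleGadget_fin_cps_order :
    ∀ zs ∈ cpsList 8 [tripleGadget (0 : Fin 8) 1 2 3 4 5 6 7, tripleGadget' 0 1 2 3 4 5 6 7]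
      (List.finRange 8),
      (zs.idxOf 0 < zs.idxOf 1 ∧ zs.idxOf 1 < zs.idxOf 2) ∨
      (zs.idxOf 1 < zs.idxOf 2 ∧ zs.idxOf 2 < zs.idxOf 0) := by
  decide +kernel

end PhyloTree

open PhyloTree in
/-- Every ordering of the eight leaves that is a cherry-picking sequence for
both triple-gadget trees satisfies `a_i < a_j < a_k` or `a_j < a_k < a_i`. -/
theorem tripleGadget_forces_order {α : Type} [DecidableEq α]
    (ai aj ak c1 c2 c3 c4 d : α)
    (hnd : ([ai, aj, ak, c1, c2, c3, c4, d] : List α).Nodup)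
    (xs : List α) (hperm : xs.Perm [ai, aj, ak, c1, c2, c3, c4, d])
    (hcps : IsCPS [tripleGadget ai aj ak c1 c2 c3 c4 d,
        tripleGadget' ai aj ak c1 c2 c3 c4 d] xs) :
    (xs.idxOf ai < xs.idxOf aj ∧ xs.idxOf aj < xs.idxOf ak) ∨
    (xs.idxOf aj < xs.idxOf ak ∧ xs.idxOf ak < xs.idxOf ai) := by
  set g : Fin 8 → α := ![ai, aj, ak, c1, c2, c3, c4, d]
  have hg : Function.Injective g := List.nodup_ofFn.mp hnd
  replace hperm : xs.Perm ((List.finRange 8).map g) := hperm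
  obtain ⟨ys, rfl⟩ : xs ∈ Set.range (List.map g) := by
    rw [Set.range_list_map]
    intro x hx
    obtain ⟨i, -, rfl⟩ := List.mem_map.mp (hperm.subset hx)
    exact Set.mem_range_self i
  have hys : ys.Perm (List.finRange 8) := (List.map_perm_map_iff hg).mp hperm
  have hcps_fin : IsCPS [tripleGadget 0 1 2 3 4 5 6 7, tripleGadget' 0 1 2 3 4 5 6 7] ys :=
    IsCPS.of_map hg hcps
  have horder := tripleGadget_fin_cps_order ys (mem_cpsList hcps_fin hys (by simp))
  rw [← List.idxOf_map_of_injective hg ys 0, ← List.idxOf_map_of_injective hg ys 1,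
    ← List.idxOf_map_of_injective hg ys 2] at horder
  exact horder
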